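/- arXiv:2209.05392 — 5 statements merged into one kernel-verified Lean document; each statement's English description precedes it below -/
import Mathlib

section
/- Let G be the group presented by three generators a, b, c subject to the two relations c·b·a = a·c·b and a·c·b = b·a·c. Then the elements a and b do not commute in G. -/
/-- The relations `cba = acb` and `acb = bac` for the group
`⟨a, b, c | cba = acb = bac⟩`, written as elements of the free group on three
generators (with `a`, `b`, `c` the generators indexed by `0`, `1`, `2`). -/
def rank2Rels : Set (FreeGroup (Fin 3)) :=
  { FreeGroup.of 2 * FreeGroup.of 1 * FreeGroup.of 0 *
      (FreeGroup.of 0 * FreeGroup.of 2 * FreeGroup.of 1)⁻¹,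
    FreeGroup.of 0 * FreeGroup.of 2 * FreeGroup.of 1 *
      (FreeGroup.of 1 * FreeGroup.of 0 * FreeGroup.of 2)⁻¹ }

/-!
Sending `a ↦ (cb)⁻¹` makes `cba`, `acb` and `bac` all trivial, so for any two elements `u`, `v`
of any group there is a homomorphism from `G` sending `a ↦ (vu)⁻¹`, `b ↦ u`, `c ↦ v`. If `a` and
`b` commuted, so would `(vu)⁻¹` and `u`, hence `u` and `v`; this fails for the generators of the
free group of rank two.
-/

theorem lift_rank2Rels_eq_one {H : Type*} [Group H] (u v : H) :
    ∀ r ∈ rank2Rels, FreeGroup.lift ![(v * u)⁻¹, u, v] r = 1 := by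
  rintro r (rfl | rfl) <;> simp [mul_assoc]

theorem FreeGroup.not_commute_of_zero_of_one :
    ¬ Commute (FreeGroup.of (0 : Fin 2)) (FreeGroup.of 1) := by
  change ¬ _ = _
  decide

theorem commute_of_commute_a_b
    (h : Commute (PresentedGroup.of (rels := rank2Rels) 0) (PresentedGroup.of 1))
    {H : Type*} [Group H] (u v : H) : Commute u v := by
  have hH := h.map (PresentedGroup.toGroup (lift_rank2Rels_eq_one u v))
  simp only [PresentedGroup.toGroup.of, Matrix.cons_val_zero, Matrix.cons_val_one] at hH
  have hvu : v * u * u = u * v * u := by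
    rw [mul_assoc u]
    exact Commute.inv_left_iff.mp hH
  exact (mul_right_cancel hvu).symm

/-- in `G = ⟨a, b, c | cba = acb = bac⟩`, the elements `a` and `b`
do not commute. -/
theorem a_b_not_commute :
    ¬ (PresentedGroup.of (rels := rank2Rels) 0 * PresentedGroup.of 1
        = PresentedGroup.of 1 * PresentedGroup.of 0) := fun h =>
  FreeGroup.not_commute_of_zero_of_one (commute_of_commute_a_b h _ _)
end

section
/- Let (W, S) be a Coxeter system, and let B⁺(W) be the positive braid monoid: the monoid presented by generators {𝐬 : s ∈ S} and relations identifying, for each pair s, s' ∈ S with m(s, s') finite, the alternating word 𝐬 𝐬' 𝐬 ⋯ of length m(s,s') with the alternating word 𝐬' 𝐬 𝐬' ⋯ of length m(s,s'). If two words (s_1, ..., s_r) and (s'_1, ..., s'_r) in S represent the same element of B⁺(W), then the multisets {s_1 ⋯ s_{k-1} s_k s_{k-1} ⋯ s_1 : 1 ≤ k ≤ r} and {s'_1 ⋯ s'_{k-1} s'_k s'_{k-1} ⋯ s'_1 : 1 ≤ k ≤ r} of elements of W are equal. In particular, the left inversion multiset Inv(𝐰) of a positive braid 𝐰 ∈ B⁺(W)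 is well-defined. -/
/-!
A braid move replaces the alternating word `s t s ⋯` of length `m = m(s, t)` by `t s t ⋯`. The left
inversion sequence of the first is `s, sts, ststs, …`, i.e. `s (t s)^k` for `k < m`, and since
`(s t)^m = 1` its `k`-th term equals the `(m - 1 - k)`-th term `t (s t)^(m - 1 - k)` of the second:
the two sequences are reverses of each other. Moreover `lis (ω ω') = lis ω ++ π(ω) • lis ω'`
(conjugation), so `ω ↦ (π ω, multiset of lis ω)` has a kernel that is a congruence on the free
monoid; it contains the braid relations, hence the congruence they generate.
-/

open CoxeterSystem

/-- The defining relation of the positive braid monoid of a Coxeter matrix `M`: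
for `i, j` with `m(i,j)` finite (nonzero in Mathlib's convention), the two
alternating words of length `m(i,j)` are identified.  The braid monoid is the
quotient of the free monoid by the congruence generated by this relation. -/
def braidRel {B : Type*} (M : CoxeterMatrix B) : FreeMonoid B → FreeMonoid B → Prop :=
  fun a b => ∃ i j : B, M i j ≠ 0 ∧
    a = FreeMonoid.ofList (alternatingWord i j (M i j)) ∧
    b = FreeMonoid.ofList (alternatingWord j i (M i j))

section Dihedral

variable {G : Type*} [Group G] {a b : G}

theorem mul_mul_pow_eq_of_mul_pow_eq_one (ha : a * a = 1) (hb : b * b = 1) {k n : ℕ}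
    (h : (a * b) ^ (k + n + 1) = 1) : a * (b * a) ^ k = b * (a * b) ^ n := by
  have hab : (a * b)⁻¹ = b * a := by
    rw [mul_inv_rev, inv_eq_of_mul_eq_one_left ha, inv_eq_of_mul_eq_one_left hb]
  have hk : (a * b) ^ k = (b * a) ^ (n + 1) := by
    rw [← hab, inv_pow, eq_inv_iff_mul_eq_one, ← pow_add, ← add_assoc, h]
  calc a * (b * a) ^ k = (a * b) ^ k * a := (mul_pow_mul a b k).symm
    _ = b * (a * b) ^ n * (a * a) := by
      rw [hk, pow_succ', mul_assoc b a, ← mul_pow_mul]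
      simp only [mul_assoc]
    _ = b * (a * b) ^ n := by rw [ha, mul_one]

theorem map_range_mul_mul_pow_eq_reverse (ha : a * a = 1) (hb : b * b = 1) {m : ℕ}
    (h : (a * b) ^ m = 1) :
    (List.range m).map (fun k => a * (b * a) ^ k) =
      ((List.range m).map (fun k => b * (a * b) ^ k)).reverse := by
  refine List.ext_getElem (by simp) fun k hk _ => ?_
  simp only [List.length_map, List.length_range] at hk
  simp only [List.getElem_map, List.getElem_reverse, List.getElem_range, List.length_map,
    List.length_range]
  exact mul_mul_pow_eq_of_mul_pow_eq_one ha hb (by rwa [show k + (m - 1 - k) + 1 = m by omega])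

end Dihedral

namespace CoxeterSystem

variable {B W : Type*} [Group W] {M : CoxeterMatrix B} (cs : CoxeterSystem M W)

theorem alternatingWord_reverse (i j : B) (m : ℕ) :
    (alternatingWord i j m).reverse =
      if Even m then alternatingWord j i m else alternatingWord i j m := by
  split_ifs <;> refine List.ext_getElem (by simp) fun k hk _ => ?_ <;>
    simp only [List.length_reverse, length_alternatingWord] at hk <;>
    simp only [List.getElem_reverse, length_alternatingWord, getElem_alternatingWord _ _ _ _ hk,
      getElem_alternatingWord _ _ _ _ (show m - 1 - k < m by omega)] <;>
    grind

theorem leftInvSeq_cons (i : B) (ω : List B) :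
    cs.leftInvSeq (i :: ω) = cs.simple i :: (cs.leftInvSeq ω).map (MulAut.conj (cs.simple i)) :=
  rfl

theorem leftInvSeq_append (ω ω' : List B) :
    cs.leftInvSeq (ω ++ ω') =
      cs.leftInvSeq ω ++ (cs.leftInvSeq ω').map (MulAut.conj (cs.wordProd ω)) := by
  induction ω with
  | nil => simp
  | cons i ω ih =>
    rw [List.cons_append, leftInvSeq_cons, leftInvSeq_cons, ih, List.map_append, List.map_map,
      wordProd_cons, map_mul, MulAut.coe_mul, List.cons_append]

-- The reversed word `i j i ⋯` starts with `i` whatever the parity of `m`.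
theorem leftInvSeq_reverse_alternatingWord (i j : B) (m : ℕ) :
    cs.leftInvSeq (alternatingWord j i m).reverse =
      (List.range m).map fun k => cs.simple i * (cs.simple j * cs.simple i) ^ k := by
  induction m generalizing i j with
  | zero => rfl
  | succ m ih =>
    rw [alternatingWord_succ, List.concat_eq_append, List.reverse_append, List.reverse_singleton,
      List.singleton_append, leftInvSeq_cons, ih, List.range_succ_eq_map, List.map_cons,
      List.map_map, List.map_map, pow_zero, mul_one]
    congr 1
    refine List.map_congr_left fun k _ => ?_
    rw [Function.comp_apply, Function.comp_apply, MulAut.conj_apply, inv_simple, ← mul_assoc,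
      ← pow_succ', mul_pow_mul]

theorem leftInvSeq_alternatingWord_perm (i j : B) {m : ℕ}
    (h : (cs.simple i * cs.simple j) ^ m = 1) :
    (cs.leftInvSeq (alternatingWord i j m)).Perm (cs.leftInvSeq (alternatingWord j i m)) := by
  have hrev : (cs.leftInvSeq (alternatingWord j i m).reverse).Perm
      (cs.leftInvSeq (alternatingWord i j m).reverse) := by
    rw [leftInvSeq_reverse_alternatingWord, leftInvSeq_reverse_alternatingWord,
      map_range_mul_mul_pow_eq_reverse (cs.simple_mul_simple_self i)
        (cs.simple_mul_simple_self j) h]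
    exact List.reverse_perm _
  rw [alternatingWord_reverse, alternatingWord_reverse] at hrev
  by_cases hm : Even m
  · simpa only [hm, if_true] using hrev
  · simpa only [hm, if_false] using hrev.symm

def leftInvCon : Con (FreeMonoid B) where
  toSetoid := Setoid.ker fun ω => (cs.wordProd ω.toList, (cs.leftInvSeq ω.toList : Multiset W))
  mul' {ω₁ ω₂ ω₃ ω₄} h₁₂ h₃₄ := by
    simp only [Setoid.ker_def, Prod.mk.injEq] at h₁₂ h₃₄ ⊢
    simp only [FreeMonoid.toList_mul, wordProd_append, leftInvSeq_append, ← Multiset.coe_add,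
      ← Multiset.map_coe, h₁₂.1, h₁₂.2, h₃₄.1, h₃₄.2, and_self]

theorem braidRel_le_leftInvCon : braidRel M ≤ cs.leftInvCon := by
  rintro _ _ ⟨i, j, -, rfl, rfl⟩
  refine Prod.ext ?_ (Multiset.coe_eq_coe.2 <|
    cs.leftInvSeq_alternatingWord_perm i j (cs.simple_mul_simple_pow i j))
  simpa only [FreeMonoid.toList_ofList, braidWord, M.symmetric j i] using
    cs.wordProd_braidWord_eq i j

end CoxeterSystem

/-- if two words over `S` represent the same element of the
positive braid monoid `B⁺(W)`, then their left inversion multisets (computed in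
`W`) coincide.  In particular the left inversion multiset of a positive braid
is well-defined. -/
theorem leftInvSeq_multiset_well_defined {B W : Type*} [Group W] {M : CoxeterMatrix B}
    (cs : CoxeterSystem M W) (l l' : List B)
    (h : conGen (braidRel M) (FreeMonoid.ofList l) (FreeMonoid.ofList l')) :
    (cs.leftInvSeq l : Multiset W) = (cs.leftInvSeq l' : Multiset W) :=
  congrArg Prod.snd (Con.conGen_le.2 cs.braidRel_le_leftInvCon h)
end

section
/- Let G be a group and let s, t ∈ G with s² = t² = 1. Write [a|b]_r for the alternating product a b a b ⋯ with r factors starting with a. Suppose [s|t]_m = [t|s]_m for some m ≥ 1. Then for every k with 1 ≤ k ≤ m, we have [s|t]_k · ([s|t]_{k-1})^{-1} = [t|s]_{m+1-k} · ([t|s]_{m-k})^{-1}. -/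
/-!
For involutions `a, b` put `c = a * b`, so that `b * a = c⁻¹`. Then
`[a|b]_n · ([b|a]_n)⁻¹ = cⁿ`, so the braid relation says exactly that `cᵐ = 1`, and the
`(n+1)`-st left inversion of `[a|b]` is the reflection `cⁿ · a`. The identity thus becomes
`c^(k-1) · s = c^(k-m) · t`, i.e. `c^(m-1) = t · s = c⁻¹`.
-/

/-- The alternating product `a b a b ⋯` with `r` factors, starting with `a`. -/
def altProd {G : Type*} [Group G] (a b : G) : ℕ → G
  | 0 => 1
  | r + 1 => a * altProd b a r

section Involutions

variable {G : Type*} [Group G]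

theorem altProd_mul_inv_altProd_swap {a b : G} (ha : a * a = 1) (hb : b * b = 1) (n : ℕ) :
    altProd a b n * (altProd b a n)⁻¹ = (a * b) ^ n := by
  induction n generalizing a b with
  | zero => simp [altProd]
  | succ n ih =>
    calc altProd a b (n + 1) * (altProd b a (n + 1))⁻¹
        = a * (altProd b a n * (altProd a b n)⁻¹) * b⁻¹ := by
          simp only [altProd, mul_inv_rev, mul_assoc]
      _ = a * (b * a) ^ n * b := by rw [ih hb ha, inv_eq_of_mul_eq_one_right hb]
      _ = (a * b) ^ (n + 1) := by rw [← mul_pow_mul, pow_succ, mul_assoc]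

theorem altProd_succ_mul_inv_altProd {a b : G} (ha : a * a = 1) (hb : b * b = 1) (n : ℕ) :
    altProd a b (n + 1) * (altProd a b n)⁻¹ = (a * b) ^ n * a := by
  induction n generalizing a b with
  | zero => simp [altProd]
  | succ n ih =>
    calc altProd a b (n + 2) * (altProd a b (n + 1))⁻¹
        = a * (altProd b a (n + 1) * (altProd b a n)⁻¹) * a⁻¹ := by
          simp only [altProd, mul_inv_rev, mul_assoc]
      _ = a * (b * a) ^ n * b * a := by
          rw [ih hb ha, inv_eq_of_mul_eq_one_right ha]
          simp only [mul_assoc]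
      _ = (a * b) ^ (n + 1) * a := by rw [← mul_pow_mul, pow_succ, mul_assoc _ a b]

theorem mul_pow_mul_eq_of_mul_pow_eq_one {a b : G} (ha : a * a = 1) (hb : b * b = 1)
    {i j : ℕ} (h : (a * b) ^ (i + j + 1) = 1) : (a * b) ^ i * a = (b * a) ^ j * b := by
  have hba : b * a = (a * b)⁻¹ := by
    rw [mul_inv_rev, inv_eq_of_mul_eq_one_right ha, inv_eq_of_mul_eq_one_right hb]
  symm
  rw [← mul_inv_eq_one, mul_inv_rev, inv_eq_of_mul_eq_one_right ha, ← inv_pow, ← hba]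
  calc (b * a) ^ j * b * (a * (b * a) ^ i) = (b * a) ^ (j + 1 + i) := by
        simp only [pow_add, pow_succ, mul_assoc]
    _ = 1 := by rw [hba, inv_pow, add_comm (j + 1), ← add_assoc, h, inv_one]

end Involutions

theorem alternating_inversion_symmetry_general {G : Type*} [Group G] (s t : G)
    (hs : s * s = 1) (ht : t * t = 1) (m : ℕ)
    (hbraid : altProd s t m = altProd t s m) :
    ∀ k, 1 ≤ k → k ≤ m →
      altProd s t k * (altProd s t (k - 1))⁻¹
        = altProd t s (m + 1 - k) * (altProd t s (m - k))⁻¹ := by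
  intro k hk hkm
  have hcycle : (s * t) ^ m = 1 := by
    rw [← altProd_mul_inv_altProd_swap hs ht, hbraid, mul_inv_cancel]
  obtain ⟨i, rfl⟩ : ∃ i, k = i + 1 := ⟨k - 1, by omega⟩
  obtain ⟨j, rfl⟩ : ∃ j, m = i + j + 1 := ⟨m - (i + 1), by omega⟩
  rw [show i + j + 1 + 1 - (i + 1) = j + 1 by omega, show i + j + 1 - (i + 1) = j by omega,
    Nat.add_sub_cancel, altProd_succ_mul_inv_altProd hs ht, altProd_succ_mul_inv_altProd ht hs]
  exact mul_pow_mul_eq_of_mul_pow_eq_one hs ht hcycle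

/-- if `s, t` are involutions in a group `G` satisfying the braid
relation `[s|t]_m = [t|s]_m`, then for all `1 ≤ k ≤ m`,
`[s|t]_k · ([s|t]_{k-1})⁻¹ = [t|s]_{m+1-k} · ([t|s]_{m-k})⁻¹`. -/
theorem alternating_inversion_symmetry {G : Type*} [Group G] (s t : G)
    (hs : s * s = 1) (ht : t * t = 1) (m : ℕ) (hm : 1 ≤ m)
    (hbraid : altProd s t m = altProd t s m) :
    ∀ k, 1 ≤ k → k ≤ m →
      altProd s t k * (altProd s t (k - 1))⁻¹
        = altProd t s (m + 1 - k) * (altProd t s (m - k))⁻¹ :=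
  alternating_inversion_symmetry_general s t hs ht m hbraid
end

section
/- Fix an integer m ≥ 3. Let A be an alphabet with 2m - 2 letters, consisting of symbols ℓ_1, ..., ℓ_m and r_2, ..., r_{m-1}, and set r_1 := ℓ_1 and r_m := ℓ_m. For each subset I ⊆ {1, ..., m} with 1 ∈ I and m ∉ I, writing I = {i_1 < i_2 < ⋯ < i_k} and {1,...,m} \setminus I = {j_1 < j_2 < ⋯ < j_p} (so j_p = m), define the unimodal word u_I := ℓ_{i_1} ℓ_{i_2} ⋯ ℓ_{i_k} r_{j_p} r_{j_{p-1}} ⋯ r_{j_1}, a word of length m over A. Then the map sending a pair (I, t), with I as above and 0 ≤ t < m, to the cyclic rotation of u_I by t positions is injective. Consequently, the set of all cyclic rotations of unimodal words has exactly m · 2^{m-2} elements. -/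
/-- The alphabet of `2m-2` letters `ℓ_1, …, ℓ_m, r_2, …, r_{m-1}` is modeled by
pairs `(i, b)` with `i ∈ {1, …, m}` (`b = false` for `ℓ_i`, `b = true` for
`r_i`), where the identifications `r_1 = ℓ_1` and `r_m = ℓ_m` are imposed by
the canonicalization map sending `(1, true) ↦ (1, false)` and
`(m, true) ↦ (m, false)`. -/
def canonLetter (m : ℕ) (p : ℕ × Bool) : ℕ × Bool :=
  if p.1 = 1 ∨ p.1 = m then (p.1, false) else p

/-- The unimodal word `u_I = ℓ_{i_1} ⋯ ℓ_{i_k} r_{j_p} ⋯ r_{j_1}`, where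
`I = {i_1 < ⋯ < i_k}` and `{1,…,m} \ I = {j_1 < ⋯ < j_p}`. -/
def unimodalWord (m : ℕ) (I : Finset ℕ) : List (ℕ × Bool) :=
  (I.sort (· ≤ ·)).map (fun i => (i, false)) ++
    (((Finset.Icc 1 m \ I).sort (· ≤ ·)).reverse).map (fun i => canonLetter m (i, true))

/-- The map sending a pair `(I, t)` (with `I ⊆ {1,…,m}`, `1 ∈ I`, `m ∉ I`,
`0 ≤ t < m`) to the cyclic rotation of the unimodal word `u_I` by `t`. -/
def rotatedUnimodal (m : ℕ)
    (p : {q : Finset ℕ × ℕ // q.1 ⊆ Finset.Icc 1 m ∧ 1 ∈ q.1 ∧ m ∉ q.1 ∧ q.2 < m}) :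
    List (ℕ × Bool) :=
  (unimodalWord m p.1.1).rotate p.1.2

/-!
Every letter of `u_I` has a distinct index, so `u_I` has no repeated letter and its `m`
rotations are pairwise distinct. A rotation keeps the set of letters, and for `i ≠ m` the
letter `ℓ_i` occurs in `u_I` exactly when `i ∈ I` (the only `r_j` equal to an `ℓ` is
`r_m = ℓ_m`, as `r_1` does not occur since `1 ∈ I`), so a rotation of `u_I` determines `I`.
The domain consists of `2^(m-2)` sets times `m` shifts.
-/

open Finset

lemma Finset.card_powerset_filter_mem_notMem {α : Type*} [DecidableEq α] {s : Finset α}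
    {a b : α} (ha : a ∈ s) (hb : b ∈ s) (hab : a ≠ b) :
    #{I ∈ s.powerset | a ∈ I ∧ b ∉ I} = 2 ^ (#s - 2) := by
  set T := (s.erase a).erase b
  have haT : ∀ J ∈ T.powerset, a ∉ J := fun J hJ haJ => by simpa [T] using mem_powerset.1 hJ haJ
  have hsplit : {I ∈ s.powerset | a ∈ I ∧ b ∉ I} = T.powerset.image (insert a) := by
    ext I
    simp only [mem_filter, mem_powerset, mem_image]
    constructor
    · rintro ⟨hIs, haI, hbI⟩
      exact ⟨I.erase a, fun x hx => by grind, insert_erase haI⟩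
    · rintro ⟨J, hJ, rfl⟩
      grind
  have hinj : Set.InjOn (insert a) (T.powerset : Set (Finset α)) := fun J hJ K hK hJK => by
    rw [← erase_insert (haT J hJ), hJK, erase_insert (haT K hK)]
  rw [hsplit, card_image_of_injOn hinj, card_powerset,
    card_erase_of_mem (mem_erase.2 ⟨hab.symm, hb⟩), card_erase_of_mem ha, Nat.sub_sub]

lemma fst_canonLetter (m : ℕ) (p : ℕ × Bool) : (canonLetter m p).1 = p.1 := by
  unfold canonLetter
  split_ifs <;> rfl

lemma map_fst_unimodalWord (m : ℕ) (I : Finset ℕ) :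
    (unimodalWord m I).map Prod.fst = I.sort (· ≤ ·) ++ ((Icc 1 m \ I).sort (· ≤ ·)).reverse := by
  simp [unimodalWord, Function.comp_def, fst_canonLetter]

lemma nodup_unimodalWord (m : ℕ) (I : Finset ℕ) : (unimodalWord m I).Nodup := by
  refine List.Nodup.of_map Prod.fst ?_
  rw [map_fst_unimodalWord]
  refine (sort_nodup _ _).append (List.nodup_reverse.2 (sort_nodup _ _)) fun i hi hi' => ?_
  simp only [List.mem_reverse, mem_sort, mem_sdiff] at hi hi'
  exact hi'.2 hi

lemma length_unimodalWord {m : ℕ} {I : Finset ℕ} (hI : I ⊆ Icc 1 m) :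
    (unimodalWord m I).length = m := by
  have hcard := card_le_card hI
  rw [← List.length_map Prod.fst, map_fst_unimodalWord]
  simp only [List.length_append, length_sort, List.length_reverse, card_sdiff_of_subset hI,
    Nat.card_Icc] at hcard ⊢
  omega

lemma mk_false_mem_unimodalWord_iff {m i : ℕ} {I : Finset ℕ} (h1I : 1 ∈ I) (him : i ≠ m) :
    (i, false) ∈ unimodalWord m I ↔ i ∈ I := by
  simp only [unimodalWord, canonLetter, List.mem_append, List.mem_map, mem_sort,
    List.mem_reverse, mem_sdiff, Prod.mk.injEq]
  constructor
  · rintro (⟨j, hjI, rfl, -⟩ | ⟨j, ⟨-, hjI⟩, hj⟩)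
    · exact hjI
    · split_ifs at hj with hj1m <;> grind
  · exact fun hi => Or.inl ⟨i, hi, rfl, trivial⟩

lemma eq_of_rotate_unimodalWord_eq {m t s : ℕ} {I J : Finset ℕ} (h1I : 1 ∈ I) (hmI : m ∉ I)
    (h1J : 1 ∈ J) (hmJ : m ∉ J) (h : (unimodalWord m I).rotate t = (unimodalWord m J).rotate s) :
    I = J := by
  ext i
  by_cases him : i = m
  · subst him
    simp only [hmI, hmJ]
  · rw [← mk_false_mem_unimodalWord_iff h1I him, ← mk_false_mem_unimodalWord_iff h1J him,
      ← List.mem_rotate (n := t), h, List.mem_rotate]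

lemma rotatedUnimodal_injective (m : ℕ) : Function.Injective (rotatedUnimodal m) := by
  rintro ⟨⟨I, t⟩, hI, h1I, hmI, ht⟩ ⟨⟨J, s⟩, _, h1J, hmJ, hs⟩ h
  obtain rfl := eq_of_rotate_unimodalWord_eq h1I hmI h1J hmJ h
  have hlen := length_unimodalWord hI
  have hne : unimodalWord m I ≠ [] := by
    rw [← List.length_pos_iff, hlen]
    omega
  have hts := (nodup_unimodalWord m I).rotate_congr hne t s h
  rw [hlen, Nat.mod_eq_of_lt ht, Nat.mod_eq_of_lt hs] at hts
  subst hts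
  rfl

lemma card_rotatedUnimodal_domain {m : ℕ} (hm : 2 ≤ m) :
    Nat.card {q : Finset ℕ × ℕ // q.1 ⊆ Icc 1 m ∧ 1 ∈ q.1 ∧ m ∉ q.1 ∧ q.2 < m} =
      2 ^ (m - 2) * m := by
  let S := {I ∈ (Icc 1 m).powerset | 1 ∈ I ∧ m ∉ I} ×ˢ range m
  have e : {q : Finset ℕ × ℕ // q.1 ⊆ Icc 1 m ∧ 1 ∈ q.1 ∧ m ∉ q.1 ∧ q.2 < m} ≃ S :=
    Equiv.subtypeEquivRight fun q => by simp [S, and_assoc]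
  rw [Nat.card_congr e, Nat.card_eq_finsetCard, card_product, card_range,
    card_powerset_filter_mem_notMem (by simp; omega) (by simp; omega) (by omega), Nat.card_Icc,
    Nat.add_sub_cancel]

/-- for `m ≥ 3`, the map `(I, t) ↦ rotate (u_I) t` is injective,
and consequently the set of all cyclic rotations of unimodal words has exactly
`m · 2^(m-2)` elements. -/
theorem rotated_unimodal_injective_card (m : ℕ) (hm : 3 ≤ m) :
    Function.Injective (rotatedUnimodal m) ∧
      (Set.range (rotatedUnimodal m)).ncard = m * 2 ^ (m - 2) := by
  have hinj := rotatedUnimodal_injective m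
  refine ⟨hinj, ?_⟩
  rw [Set.ncard_range_of_injective hinj, card_rotatedUnimodal_domain (by omega), mul_comm]
end

section
/- Let (W, S) be a Coxeter system, let B⁺(W) be the positive braid monoid presented by generators {𝐬 : s ∈ S} and the braid relations, and let lift : W → B⁺(W) be the map sending w to the element represented by any reduced word for w (well-defined by Matsumoto's theorem). Order B⁺(W) by the prefix order: 𝐮 ≤ 𝐯 iff there exists 𝐳 ∈ B⁺(W) with 𝐮·𝐳 = 𝐯. Then for all u, v ∈ W: u ≤ v in the right weak order on W (i.e. some reduced word for v has a reduced word for u as a prefix) if and only if lift(u) ≤ lift(v) in B⁺(W). In particular, lift is an order embedding of the weak order on W into the prefix order on B⁺(W). -/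
/-!
The braid relations preserve both the product of a word in `W` and its length, hence so does
braid equivalence, and a word braid-equivalent to a reduced word is itself reduced with the same
product. If `lift u * z = lift v`, write `u`, `v` as reduced words `lu`, `lv` and `z` as a
word `lz`: then `lu ++ lz` is braid-equivalent to `lv`, so it is a reduced word for `v` with
prefix `lu`.
-/

open CoxeterSystem

/-- The positive braid monoid `B⁺(W)` of a Coxeter matrix `M`. -/
abbrev BraidMonoid {B : Type*} (M : CoxeterMatrix B) :=
  (conGen (braidRel M)).Quotient

def FreeMonoid.lengthHom {α : Type*} : FreeMonoid α →* Multiplicative ℕ where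
  toFun a := Multiplicative.ofAdd a.length
  map_one' := rfl
  map_mul' a b := by simp only [FreeMonoid.length_mul, ofAdd_add]

namespace BraidMonoid

variable {B W : Type*} [Group W] {M : CoxeterMatrix B}

theorem length_eq_of_conGen {a b : FreeMonoid B} (h : conGen (braidRel M) a b) :
    a.length = b.length := by
  have hle : conGen (braidRel M) ≤ Con.ker (FreeMonoid.lengthHom (α := B)) := by
    refine Con.conGen_le.2 fun a b ⟨i, j, _, ha, hb⟩ => ?_
    simp only [Con.ker_rel, FreeMonoid.lengthHom, MonoidHom.coe_mk, OneHom.coe_mk, ha, hb,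
      FreeMonoid.length, FreeMonoid.toList_ofList, length_alternatingWord]
  exact (Con.ker_rel _).1 (hle h)

theorem wordProd_eq_of_conGen (cs : CoxeterSystem M W) {a b : FreeMonoid B}
    (h : conGen (braidRel M) a b) : cs.wordProd a.toList = cs.wordProd b.toList := by
  have hle : conGen (braidRel M) ≤ Con.ker (FreeMonoid.lift cs.simple) := by
    refine Con.conGen_le.2 fun a b ⟨i, j, _, ha, hb⟩ => ?_
    have hbraid := cs.wordProd_braidWord_eq i j
    rw [braidWord, braidWord, M.symmetric j i] at hbraid
    rwa [Con.ker_rel, ha, hb, FreeMonoid.lift_ofList, FreeMonoid.lift_ofList]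
  simpa only [FreeMonoid.lift_apply, wordProd] using (Con.ker_rel _).1 (hle h)

theorem isReduced_of_mk'_eq (cs : CoxeterSystem M W) {l l' : List B} (hl' : cs.IsReduced l')
    (h : Con.mk' (conGen (braidRel M)) (FreeMonoid.ofList l) =
      Con.mk' (conGen (braidRel M)) (FreeMonoid.ofList l')) :
    cs.IsReduced l ∧ cs.wordProd l = cs.wordProd l' := by
  have hrel := (Con.eq _).1 h
  have hprod : cs.wordProd l = cs.wordProd l' := wordProd_eq_of_conGen cs hrel
  refine ⟨?_, hprod⟩
  rw [CoxeterSystem.IsReduced, hprod, hl'.eq]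
  exact (length_eq_of_conGen hrel).symm

end BraidMonoid

/-- the standard lift `lift : W → B⁺(W)` (sending `w` to the
positive braid represented by any reduced word for `w`) is an order embedding
of the right weak order on `W` into the prefix order on `B⁺(W)`: `u ≤ v` in
weak order (some reduced word for `v` has a reduced word for `u` as a prefix)
iff `lift u` is a prefix of `lift v` in `B⁺(W)`. -/
theorem lift_order_embedding {B W : Type*} [Group W] {M : CoxeterMatrix B}
    (cs : CoxeterSystem M W) (lift : W → BraidMonoid M)
    (hlift : ∀ l : List B, cs.IsReduced l →
      lift (cs.wordProd l) = Con.mk' (conGen (braidRel M)) (FreeMonoid.ofList l)) :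
    ∀ u v : W,
      (∃ l₁ l₂ : List B, cs.IsReduced (l₁ ++ l₂) ∧
          cs.wordProd l₁ = u ∧ cs.wordProd (l₁ ++ l₂) = v)
        ↔ ∃ z : BraidMonoid M, lift u * z = lift v := by
  intro u v
  constructor
  · rintro ⟨l₁, l₂, hred, rfl, rfl⟩
    have hred₁ : cs.IsReduced l₁ := by simpa using hred.take l₁.length
    refine ⟨Con.mk' _ (FreeMonoid.ofList l₂), ?_⟩
    rw [hlift l₁ hred₁, hlift _ hred, ← map_mul, FreeMonoid.ofList_append]
  · rintro ⟨z, hz⟩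
    obtain ⟨lu, hlu, rfl⟩ := cs.exists_isReduced u
    obtain ⟨lv, hlv, rfl⟩ := cs.exists_isReduced v
    obtain ⟨lz, rfl⟩ := Con.mk'_surjective z
    rw [hlift lu hlu, hlift lv hlv, ← map_mul, ← FreeMonoid.ofList_toList lz,
      ← FreeMonoid.ofList_append] at hz
    obtain ⟨hred, hprod⟩ := BraidMonoid.isReduced_of_mk'_eq cs hlv hz
    exact ⟨lu, lz.toList, hred, rfl, hprod⟩
end
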